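/- arXiv:1504.05771 — 5 statements merged into one kernel-verified Lean document; each statement's English description precedes it below -/
import Mathlib

section
/- For any function f: {0,...,N-1} → ℝ, any s ≥ 0, any 1 ≤ m ≤ N, and any measure m_N(k) = (1+E/N)^{-k} with E > 0, one has f(N-1)^2 ≤ 2 e^{E} ( (m/N^2) D_N(f) + (1/m) ⟨f,f⟩_{m_N} ), where D_N(f) = N^2 Σ_{k=0}^{N-2} (f(k+1)-f(k))^2 m_N(k) and ⟨f,f⟩_{m_N} = Σ_{k=0}^{N-1} f(k)^2 m_N(k), provided m_N(k) ≥ e^{-E} for all 0 ≤ k ≤ N-1. -/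
/-!
For each of the last `m` sites `j`, write `f (N-1)` as `f j` plus a telescoping sum of at most
`m` increments; Young's inequality and Cauchy–Schwarz bound `f (N-1)^2` by
`2 f j^2 + 2 m ∑ (Δf)^2`. Averaging over these `m` sites gives the unweighted estimate, and the
lower bound `m_N ≥ e^{-E}` converts both sums into `m_N`-weighted ones at the cost of `e^E`.
-/

open Finset

theorem sq_le_two_mul_sq_add_two_mul_sum_sq_sub (f : ℕ → ℝ) {j n : ℕ} (hjn : j ≤ n) :
    f n ^ 2 ≤ 2 * f j ^ 2 + 2 * (n - j : ℕ) * ∑ k ∈ Ico j n, (f (k + 1) - f k) ^ 2 := by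
  have htel : f n = f j + ∑ k ∈ Ico j n, (f (k + 1) - f k) := by
    rw [sum_Ico_sub f hjn]; ring
  have hcs := sq_sum_le_card_mul_sum_sq (s := Ico j n) (f := fun k => f (k + 1) - f k)
  rw [Nat.card_Ico] at hcs
  rw [htel]
  nlinarith [add_sq_le (a := f j) (b := ∑ k ∈ Ico j n, (f (k + 1) - f k))]

theorem mul_sq_last_le_sum_sq_add_sum_sq_sub (f : ℕ → ℝ) {N m : ℕ} (hmN : m ≤ N) :
    m * f (N - 1) ^ 2 ≤
      2 * ∑ k ∈ range N, f k ^ 2 + 2 * m ^ 2 * ∑ k ∈ range (N - 1), (f (k + 1) - f k) ^ 2 := by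
  set S := ∑ k ∈ range (N - 1), (f (k + 1) - f k) ^ 2
  have hsite : ∀ j ∈ Ico (N - m) N, f (N - 1) ^ 2 ≤ 2 * f j ^ 2 + 2 * m * S := by
    intro j hj
    rw [mem_Ico] at hj
    refine (sq_le_two_mul_sq_add_two_mul_sum_sq_sub f (by omega : j ≤ N - 1)).trans ?_
    have hlen : ((N - 1 - j : ℕ) : ℝ) ≤ m := by exact_mod_cast (by omega : N - 1 - j ≤ m)
    have hpart : ∑ k ∈ Ico j (N - 1), (f (k + 1) - f k) ^ 2 ≤ S := by
      refine sum_le_sum_of_subset_of_nonneg ?_ fun _ _ _ => sq_nonneg _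
      rw [range_eq_Ico]; exact Ico_subset_Ico_left (Nat.zero_le j)
    gcongr
  have hcard : #(Ico (N - m) N) = m := by rw [Nat.card_Ico]; omega
  have hsum := sum_le_sum hsite
  rw [sum_const, hcard, nsmul_eq_mul, sum_add_distrib, sum_const, hcard, nsmul_eq_mul,
    ← mul_sum] at hsum
  have hsub : ∑ k ∈ Ico (N - m) N, f k ^ 2 ≤ ∑ k ∈ range N, f k ^ 2 := by
    refine sum_le_sum_of_subset_of_nonneg ?_ fun _ _ _ => sq_nonneg _
    rw [range_eq_Ico]; exact Ico_subset_Ico_left (Nat.zero_le _)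
  linarith

theorem sum_le_mul_sum_mul_of_one_le_mul {ι : Type*} (s : Finset ι) {g w : ι → ℝ} {c : ℝ}
    (hg : ∀ i ∈ s, 0 ≤ g i) (hw : ∀ i ∈ s, 1 ≤ c * w i) :
    ∑ i ∈ s, g i ≤ c * ∑ i ∈ s, g i * w i := by
  rw [mul_sum]
  refine sum_le_sum fun i hi => ?_
  nlinarith [hg i hi, hw i hi]

theorem stmt0_general (N m : ℕ) (hm1 : 1 ≤ m) (hmN : m ≤ N)
    (E : ℝ) (f : ℕ → ℝ) (mN : ℕ → ℝ)
    (hlb : ∀ k < N, Real.exp (-E) ≤ mN k) :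
    f (N - 1) ^ 2 ≤
      2 * Real.exp E *
        ((m / (N : ℝ) ^ 2) *
            ((N : ℝ) ^ 2 * ∑ k ∈ range (N - 1), (f (k + 1) - f k) ^ 2 * mN k) +
          (1 / m) * ∑ k ∈ range N, f k ^ 2 * mN k) := by
  have hm : (0 : ℝ) < m := by exact_mod_cast hm1
  have hN : (N : ℝ) ≠ 0 := by exact_mod_cast (by omega : N ≠ 0)
  have hweight : ∀ k < N, 1 ≤ Real.exp E * mN k := fun k hk =>
    calc 1 = Real.exp E * Real.exp (-E) := by rw [← Real.exp_add, add_neg_cancel, Real.exp_zero]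
      _ ≤ Real.exp E * mN k := by gcongr; exact hlb k hk
  have hvalues := sum_le_mul_sum_mul_of_one_le_mul (range N) (g := fun k => f k ^ 2)
    (fun _ _ => sq_nonneg _) fun k hk => hweight k (mem_range.mp hk)
  have hincrements := sum_le_mul_sum_mul_of_one_le_mul (range (N - 1))
    (g := fun k => (f (k + 1) - f k) ^ 2) (fun _ _ => sq_nonneg _)
    fun k hk => hweight k (by rw [mem_range] at hk; omega)
  have hboundary := mul_sq_last_le_sum_sq_add_sum_sq_sub f hmN
  refine le_of_mul_le_mul_left (hboundary.trans ?_) hm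
  calc _ ≤ 2 * (Real.exp E * ∑ k ∈ range N, f k ^ 2 * mN k) +
        2 * m ^ 2 * (Real.exp E * ∑ k ∈ range (N - 1), (f (k + 1) - f k) ^ 2 * mN k) := by
        gcongr
    _ = _ := by field_simp; ring

/-- boundary value estimate by Dirichlet form and L²(m_N) norm. -/
theorem stmt0 (N m : ℕ) (hN : 2 ≤ N) (hm1 : 1 ≤ m) (hmN : m ≤ N)
    (E : ℝ) (hE : 0 < E) (f : ℕ → ℝ) (mN : ℕ → ℝ)
    (hmdef : ∀ k, mN k = (1 + E / N) ^ (-(k : ℤ)))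
    (hlb : ∀ k < N, Real.exp (-E) ≤ mN k) :
    f (N - 1) ^ 2 ≤
      2 * Real.exp E *
        ((m / (N : ℝ) ^ 2) *
            ((N : ℝ) ^ 2 * ∑ k ∈ range (N - 1), (f (k + 1) - f k) ^ 2 * mN k) +
          (1 / m) * ∑ k ∈ range N, f k ^ 2 * mN k) :=
  stmt0_general N m hm1 hmN E f mN hlb
end

section
/- Let Ω be the linear operator on functions f: {0,...,N-1} → ℝ defined by (Ωf)(0) = -αEN f(0) + N(f(1)-f(0))N, (Ωf)(j) = N^2(f(j+1)+f(j-1)-2f(j)) - EN(f(j)-f(j-1)) for 1 ≤ j ≤ N-2, and (Ωf)(N-1) = βEN f(N-1) - N(1+E/N)·N(f(N-1)-f(N-2)). Then Ω is self-adjoint with respect to the measure m_N(k) = (1+E/N)^{-k}, i.e., Σ_k g(k)(Ωf)(k) m_N(k) = Σ_k (Ωg)(k) f(k) m_N(k) for all f, g. -/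
open Finset

/-!
In the bulk `Ω` is a nearest-neighbour jump operator with rate `N²` to the right and
`N² + EN` to the left, reversible for any `m` with `m k = (1 + E/N) m (k+1)`. Hence
`g Ωf m - (Ωg) f m` is the discrete divergence of the flux `N² (g(k) f(k+1) - f(k) g(k+1)) m(k)`;
at the two ends the boundary terms in `α` and `β` are symmetric in `f, g` and cancel, the jump
rates there are the bulk ones, and the sum over `j < N` telescopes to zero.
-/

/-- The operator `Ω` of the boundary driven WASEP Cole–Hopf equation. -/
noncomputable def OmegaOp (N : ℕ) (E α β : ℝ) (f : ℕ → ℝ) : ℕ → ℝ := fun j =>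
  if j = 0 then
    -α * E * N * f 0 + N * (N * (f 1 - f 0))
  else if j = N - 1 then
    β * E * N * f (N - 1) - N * (1 + E / N) * (N * (f (N - 1) - f (N - 2)))
  else
    (N : ℝ) ^ 2 * (f (j + 1) + f (j - 1) - 2 * f j) - E * (N * (f j - f (j - 1)))

noncomputable def wronskianFlux (N : ℕ) (m f g : ℕ → ℝ) (k : ℕ) : ℝ :=
  (N : ℝ) ^ 2 * (g k * f (k + 1) - f k * g (k + 1)) * m k

section DetailedBalance

variable {N : ℕ} {E α β : ℝ} {m : ℕ → ℝ}

lemma OmegaOp_commutator_zero (f g : ℕ → ℝ) :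
    g 0 * OmegaOp N E α β f 0 * m 0 - OmegaOp N E α β g 0 * f 0 * m 0 =
      wronskianFlux N m f g 0 := by
  simp only [OmegaOp, ↓reduceIte, wronskianFlux]
  ring

lemma OmegaOp_commutator_interior {i : ℕ} (hi : i + 2 < N)
    (hm : m i = (1 + E / N) * m (i + 1)) (f g : ℕ → ℝ) :
    g (i + 1) * OmegaOp N E α β f (i + 1) * m (i + 1) -
        OmegaOp N E α β g (i + 1) * f (i + 1) * m (i + 1) =
      wronskianFlux N m f g (i + 1) - wronskianFlux N m f g i := by
  have hN : (N : ℝ) ≠ 0 := by norm_cast; omega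
  have hrate : (N : ℝ) ^ 2 * (1 + E / N) = N ^ 2 + E * N := by field_simp
  simp only [OmegaOp, wronskianFlux, if_neg (show i + 1 ≠ 0 by omega),
    if_neg (show i + 1 ≠ N - 1 by omega), Nat.add_sub_cancel, hm]
  linear_combination (g i * f (i + 1) - f i * g (i + 1)) * m (i + 1) * hrate

lemma OmegaOp_commutator_last {M : ℕ} (hm : m M = (1 + E / (M + 2 : ℕ)) * m (M + 1))
    (f g : ℕ → ℝ) :
    g (M + 1) * OmegaOp (M + 2) E α β f (M + 1) * m (M + 1) -
        OmegaOp (M + 2) E α β g (M + 1) * f (M + 1) * m (M + 1) =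
      -wronskianFlux (M + 2) m f g M := by
  simp only [OmegaOp, wronskianFlux, if_neg (show M + 1 ≠ 0 by omega),
    show M + 2 - 1 = M + 1 by omega, show M + 2 - 2 = M by omega, ↓reduceIte, hm]
  ring

theorem OmegaOp_selfAdjoint (hN : 2 ≤ N) (hm : ∀ k, m k = (1 + E / N) * m (k + 1))
    (f g : ℕ → ℝ) :
    ∑ k ∈ range N, g k * OmegaOp N E α β f k * m k =
      ∑ k ∈ range N, OmegaOp N E α β g k * f k * m k := by
  obtain ⟨M, rfl⟩ : ∃ M, N = M + 2 := ⟨N - 2, by omega⟩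
  have interior : ∀ i ∈ range M,
      g (i + 1) * OmegaOp (M + 2) E α β f (i + 1) * m (i + 1) -
          OmegaOp (M + 2) E α β g (i + 1) * f (i + 1) * m (i + 1) =
        wronskianFlux (M + 2) m f g (i + 1) - wronskianFlux (M + 2) m f g i :=
    fun i hi => OmegaOp_commutator_interior (by simp at hi; omega) (hm i) f g
  rw [← sub_eq_zero, ← sum_sub_distrib, sum_range_succ, sum_range_succ', sum_congr rfl interior,
    sum_range_sub, OmegaOp_commutator_zero, OmegaOp_commutator_last (hm M)]
  ring

end DetailedBalance

lemma zpow_neg_natCast_eq_mul_succ {θ : ℝ} (hθ : θ ≠ 0) (k : ℕ) :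
    θ ^ (-(k : ℤ)) = θ * θ ^ (-((k + 1 : ℕ) : ℤ)) := by
  rw [zpow_neg, zpow_neg, zpow_natCast, zpow_natCast, pow_succ]
  field_simp

theorem stmt2_general (N : ℕ) (hN : 2 ≤ N) (E α β : ℝ) (hE : 0 < E)
    (mN : ℕ → ℝ) (hmdef : ∀ k, mN k = (1 + E / N) ^ (-(k : ℤ))) :
    ∀ f g : ℕ → ℝ,
      ∑ k ∈ range N, g k * OmegaOp N E α β f k * mN k =
        ∑ k ∈ range N, OmegaOp N E α β g k * f k * mN k := by
  have hθ : 1 + E / N ≠ 0 := by positivity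
  refine OmegaOp_selfAdjoint hN fun k => ?_
  rw [hmdef, hmdef, zpow_neg_natCast_eq_mul_succ hθ]

/-- `Ω` is self-adjoint in `L²(m_N)` with `m_N(k) = (1+E/N)^{-k}`. -/
theorem stmt2 (N : ℕ) (hN : 2 ≤ N) (E α β : ℝ) (hE : 0 < E)
    (hα : α ∈ Set.Ioo (0 : ℝ) 1) (hβ : β ∈ Set.Ioo (0 : ℝ) 1)
    (mN : ℕ → ℝ) (hmdef : ∀ k, mN k = (1 + E / N) ^ (-(k : ℤ))) :
    ∀ f g : ℕ → ℝ,
      ∑ k ∈ range N, g k * OmegaOp N E α β f k * mN k =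
        ∑ k ∈ range N, OmegaOp N E α β g k * f k * mN k :=
  stmt2_general N hN E α β hE mN hmdef
end

section
/- Fix n ≥ 1 and γ ≤ 0. Suppose f_0: {0,...,N-1} → ℝ is nonnegative and monotone nondecreasing (f_0(j) ≤ f_0(j+1) for 0 ≤ j < N-1), and f_t solves the linear ODE system df_t/dt = Ω_n f_t, where Ω_n is a tridiagonal operator such that g_t(j) := f_t(j) - f_t(j-1) satisfies dg_t/dt = Ω̃_n g_t + ψ_t, with Ω̃_n a tridiagonal matrix having nonnegative off-diagonal entries (upper off-diagonal N^2, lower off-diagonal N^2(1+E/N)), and ψ_t a vector with all entries nonnegative whenever f_t is nonnegative. Then f_t(j) ≤ f_t(j+1) for all t ≥ 0 and 0 ≤ j < N-1. -/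
/-!
The increments `g_t(j) = f_t(j+1) - f_t(j)` solve `g' = Ω̃ g + ψ` with `Ω̃` Metzler and `ψ ≥ 0`, and
such an equation preserves the nonnegative cone. For `K` above every row sum of `Ω̃`, the perturbed
vector `g_t + ε e^{Kt}` cannot leave the open cone: at a time where one coordinate vanishes and the
others are nonnegative, only the nonnegative off-diagonal entries contribute to that coordinate of
`Ω̃ g_t`, so its derivative is at least `ε e^{Kt} (K - ∑_j Ω̃_{ij}) > 0`. Letting `ε → 0` gives
`g_t ≥ 0`, i.e. `f_t` stays nondecreasing.
-/

open Matrix Set Filter Topology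

def Matrix.IsMetzler {n R : Type*} [Zero R] [LE R] (A : Matrix n n R) : Prop :=
  ∀ i j, i ≠ j → 0 ≤ A i j

theorem Matrix.IsMetzler.mulVec_apply_nonneg {n R : Type*} [Fintype n] [CommSemiring R]
    [PartialOrder R] [IsOrderedRing R] {A : Matrix n n R} (hA : A.IsMetzler) {v : n → R}
    (hv : 0 ≤ v) {i : n} (hvi : v i = 0) : 0 ≤ (A *ᵥ v) i := by
  refine Finset.sum_nonneg fun j _ => ?_
  rcases eq_or_ne i j with rfl | hij
  · simp [hvi]
  · exact mul_nonneg (hA i j hij) (hv j)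

theorem HasDerivAt.eventually_pos_nhdsGT {u : ℝ → ℝ} {u' t : ℝ} (hu : HasDerivAt u u' t)
    (hut : u t = 0) (hu' : 0 < u') : ∀ᶠ s in 𝓝[>] t, 0 < u s := by
  have hslope : Tendsto (slope u t) (𝓝[>] t) (𝓝 u') :=
    (hasDerivAt_iff_tendsto_slope.mp hu).mono_left (nhdsGT_le_nhdsNE t)
  filter_upwards [hslope.eventually (eventually_gt_nhds hu'), self_mem_nhdsWithin] with s hs hts
  exact pos_of_slope_pos hts hs hut

theorem nonneg_of_eventually_nonneg_nhdsGT {α : Type*} [Zero α] [Preorder α] [TopologicalSpace α]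
    [OrderClosedTopology α] {y : ℝ → α} (hy : ContinuousOn y (Ici 0)) (h0 : 0 ≤ y 0)
    (hstep : ∀ t, 0 ≤ t → 0 ≤ y t → ∀ᶠ s in 𝓝[>] t, 0 ≤ y s) :
    ∀ t, 0 ≤ t → 0 ≤ y t := by
  intro T hT
  have hclosed : IsClosed ({t | 0 ≤ y t} ∩ Icc 0 T) := by
    rw [inter_comm]
    exact isClosed_Icc.isClosed_le continuousOn_const (hy.mono Icc_subset_Ici_self)
  exact hclosed.Icc_subset_of_forall_mem_nhdsWithin h0 (fun t ht => hstep t ht.2.1 ht.1)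
    ⟨hT, le_rfl⟩

section MetzlerODE

variable {ι : Type*} [Fintype ι] {A : Matrix ι ι ℝ} {g ψ : ℝ → ι → ℝ}

theorem Matrix.IsMetzler.perturbed_nonneg_of_hasDerivAt (hA : A.IsMetzler) {K : ℝ}
    (hK : ∀ i, ∑ j, A i j < K) (hg : ∀ t, 0 ≤ t → HasDerivAt g (A *ᵥ g t + ψ t) t)
    (hψ : ∀ t, 0 ≤ t → 0 ≤ ψ t) (h0 : 0 ≤ g 0) {ε : ℝ} (hε : 0 < ε) :
    ∀ t, 0 ≤ t → 0 ≤ g t + fun _ => ε * Real.exp (K * t) := by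
  set y : ℝ → ι → ℝ := fun t => g t + fun _ => ε * Real.exp (K * t)
  have hy : ∀ t, 0 ≤ t → HasDerivAt y (A *ᵥ g t + ψ t + fun _ => ε * (Real.exp (K * t) * K)) t :=
    fun t ht => (hg t ht).add <| hasDerivAt_pi.mpr fun _ =>
      (((hasDerivAt_id t).const_mul K).exp.const_mul ε).congr_deriv (by simp)
  refine nonneg_of_eventually_nonneg_nhdsGT
    (continuousOn_of_forall_continuousAt fun t ht => (hy t ht).continuousAt) ?_ ?_
  · have hε0 : 0 < ε * Real.exp (K * 0) := by positivity
    exact fun i => add_nonneg (h0 i) hε0.le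
  intro t ht hyt
  suffices ∀ i, ∀ᶠ s in 𝓝[>] t, 0 < y s i by
    filter_upwards [eventually_all.mpr this] with s hs i using (hs i).le
  intro i
  rcases (hyt i).lt_or_eq with hpos | hzero
  · exact nhdsWithin_le_nhds <|
      (hasDerivAt_pi.mp (hy t ht) i).continuousAt.eventually (eventually_gt_nhds hpos)
  refine (hasDerivAt_pi.mp (hy t ht) i).eventually_pos_nhdsGT hzero.symm ?_
  have hgy : g t = y t - (ε * Real.exp (K * t)) • 1 := by
    ext j; simp [y]
  have hAy : 0 ≤ (A *ᵥ y t) i := hA.mulVec_apply_nonneg hyt hzero.symm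
  have hrow : ε * Real.exp (K * t) * ∑ j, A i j < ε * Real.exp (K * t) * K :=
    mul_lt_mul_of_pos_left (hK i) (by positivity)
  have hA1 : (A *ᵥ 1) i = ∑ j, A i j := by simp only [mulVec, dotProduct, Pi.one_apply, mul_one]
  simp only [hgy, mulVec_sub, mulVec_smul, Pi.add_apply, Pi.sub_apply, Pi.smul_apply, smul_eq_mul,
    hA1]
  have hψi : 0 ≤ ψ t i := hψ t ht i
  linarith

theorem Matrix.IsMetzler.nonneg_of_hasDerivAt (hA : A.IsMetzler)
    (hg : ∀ t, 0 ≤ t → HasDerivAt g (A *ᵥ g t + ψ t) t) (hψ : ∀ t, 0 ≤ t → 0 ≤ ψ t)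
    (h0 : 0 ≤ g 0) : ∀ t, 0 ≤ t → 0 ≤ g t := by
  obtain ⟨M, hM⟩ := Finite.bddAbove_range fun i => ∑ j, A i j
  have hK : ∀ i, ∑ j, A i j < M + 1 := fun i => (hM (mem_range_self i)).trans_lt (lt_add_one M)
  intro t ht i
  refine le_of_forall_pos_le_add fun δ hδ => ?_
  have hε : 0 < δ * Real.exp (-((M + 1) * t)) := by positivity
  have := hA.perturbed_nonneg_of_hasDerivAt hK hg hψ h0 hε t ht i
  rwa [Pi.add_apply, mul_assoc, ← Real.exp_add, neg_add_cancel, Real.exp_zero, mul_one] at this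

end MetzlerODE

theorem stmt6_general (N : ℕ)
    (f : ℝ → ℕ → ℝ)
    (hf0mono : ∀ j, j + 1 ≤ N - 1 → f 0 j ≤ f 0 (j + 1))
    (hfnonneg : ∀ t : ℝ, 0 ≤ t → ∀ j, 0 ≤ f t j)
    (Ωtilde : Matrix (Fin (N - 1)) (Fin (N - 1)) ℝ)
    (hMetzler : ∀ i j, i ≠ j → 0 ≤ Ωtilde i j)
    (ψ : ℝ → Fin (N - 1) → ℝ)
    (hψ : ∀ t : ℝ, 0 ≤ t → (∀ j, 0 ≤ f t j) → ∀ i, 0 ≤ ψ t i)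
    (hg : ∀ t : ℝ,
      HasDerivAt (fun s => (fun i : Fin (N - 1) => f s ((i : ℕ) + 1) - f s (i : ℕ)))
        (Ωtilde.mulVec (fun i : Fin (N - 1) => f t ((i : ℕ) + 1) - f t (i : ℕ)) + ψ t) t) :
    ∀ t : ℝ, 0 ≤ t → ∀ j, j + 1 ≤ N - 1 → f t j ≤ f t (j + 1) := by
  have hinc := Matrix.IsMetzler.nonneg_of_hasDerivAt hMetzler (fun t _ => hg t)
    (fun t ht => hψ t ht (hfnonneg t ht)) (fun i => sub_nonneg.mpr (hf0mono i i.isLt))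
  intro t ht j hj
  exact sub_nonneg.mp (hinc t ht ⟨j, hj⟩)

/-- monotonicity preservation for the semigroup generated by `Ω_n`:
if the increments `g_t(j) = f_t(j+1) - f_t(j)` solve a linear ODE driven by a
Metzler (tridiagonal, nonnegative off-diagonal) matrix with a source that is
nonnegative whenever `f_t` is nonnegative, then monotonicity of `f_0` is
conserved. -/
theorem stmt6 (N : ℕ) (hN : 3 ≤ N) (n : ℕ) (hn : 1 ≤ n)
    (E : ℝ) (hE : 0 < E) (γ : ℝ) (hγ : γ ≤ 0)
    (f : ℝ → ℕ → ℝ)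
    (hf0nonneg : ∀ j, 0 ≤ f 0 j)
    (hf0mono : ∀ j, j + 1 ≤ N - 1 → f 0 j ≤ f 0 (j + 1))
    (hfnonneg : ∀ t : ℝ, 0 ≤ t → ∀ j, 0 ≤ f t j)
    (Ωtilde : Matrix (Fin (N - 1)) (Fin (N - 1)) ℝ)
    (hMetzler : ∀ i j, i ≠ j → 0 ≤ Ωtilde i j)
    (htridiag : ∀ i j : Fin (N - 1), ((i : ℕ) + 1 = j → Ωtilde i j = (N : ℝ) ^ 2) ∧
      ((j : ℕ) + 1 = i → Ωtilde i j = (N : ℝ) ^ 2 * (1 + E / N)))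
    (ψ : ℝ → Fin (N - 1) → ℝ)
    (hψ : ∀ t : ℝ, 0 ≤ t → (∀ j, 0 ≤ f t j) → ∀ i, 0 ≤ ψ t i)
    (hg : ∀ t : ℝ,
      HasDerivAt (fun s => (fun i : Fin (N - 1) => f s ((i : ℕ) + 1) - f s (i : ℕ)))
        (Ωtilde.mulVec (fun i : Fin (N - 1) => f t ((i : ℕ) + 1) - f t (i : ℕ)) + ψ t) t) :
    ∀ t : ℝ, 0 ≤ t → ∀ j, j + 1 ≤ N - 1 → f t j ≤ f t (j + 1) :=
  stmt6_general N f hf0mono hfnonneg Ωtilde hMetzler ψ hψ hg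
end

section
/- Let φ_ε: [0,1] → [δ, 1-2ε] with δ = ε/(1+ε), ε > 0, be defined by φ_ε(t) = √(δ² + t) for 0 ≤ t ≤ 1/8 and φ_ε(t) = 1 - √(4ε² + 1 - t) for 7/8 ≤ t ≤ 1, extended to an increasing C¹ function on [1/8, 7/8] with derivative bounded by 2 there and with φ_ε(t)(1-φ_ε(t)) bounded below on [1/8,7/8] by a constant independent of ε. Then ∫_0^1 1/(φ_ε(t)(1-φ_ε(t))) dt ≤ C and ∫_0^1 φ_ε'(t) log_+( φ_ε'(t)/(φ_ε(t)(1-φ_ε(t))) ) dt ≤ C for a constant C independent of ε ∈ (0, 1/10]. -/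
/-!
Split `[0, 1]` at `1/8` and `7/8`. On the middle piece both integrands are bounded by constants
depending on `c₀` only. On `[0, 1/8]` we have `φ = √(a + t)` with `a = δ²` small, so
`φ (1 - φ) ≥ √t / 2` and `φ' = 1 / (2φ) ≤ 1 / (2√t)`; since `log₊ (1/t) ≤ 4 t^(-1/4)`, the integrands
are dominated by `2 t^(-1/2)` and `2 t^(-3/4)`, whose integrals do not depend on `a`. The end
`[7/8, 1]` is reduced to this one by `t ↦ 1 - t`, `φ ↦ 1 - φ (1 - ·)`, which preserves `φ (1 - φ)`
and `φ'`. The same dominations give integrability, `φ'` being measurable as a derivative.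
-/

open Set Real MeasureTheory intervalIntegral

lemma max_log_inv_le_four_mul_rpow {t : ℝ} (ht : 0 < t) :
    max (log t⁻¹) 0 ≤ 4 * t ^ (-(1 / 4 : ℝ)) := by
  have h := log_le_rpow_div (inv_nonneg.2 ht.le) (by norm_num : (0 : ℝ) < 1 / 4)
  rw [inv_rpow ht.le, ← rpow_neg ht.le] at h
  exact max_le (by linarith) (by positivity)

lemma one_div_mul_one_sub_le {s t : ℝ} (ht : 0 < t) (hts : √t ≤ s) (hs : s ≤ 1 / 2) :
    1 / (s * (1 - s)) ≤ 2 * t ^ (-(1 / 2 : ℝ)) := by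
  have hsqrt : 0 < √t := sqrt_pos.2 ht
  rw [rpow_neg ht.le, ← sqrt_eq_rpow]
  calc 1 / (s * (1 - s)) ≤ 1 / (√t / 2) := one_div_le_one_div_of_le (by positivity) (by nlinarith)
    _ = 2 * (√t)⁻¹ := by ring

lemma one_div_two_mul_mul_max_log_le {s t : ℝ} (ht : 0 < t) (hts : √t ≤ s) (hs : s ≤ 1 / 2) :
    1 / (2 * s) * max (log (1 / (2 * s) / (s * (1 - s)))) 0 ≤ 2 * t ^ (-(3 / 4 : ℝ)) := by
  have hsqrt : 0 < √t := sqrt_pos.2 ht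
  have hs0 : 0 < s := hsqrt.trans_le hts
  have hts2 : t ≤ s ^ 2 := by nlinarith [sq_sqrt ht.le]
  have hvar : 0 < s * (1 - s) := mul_pos hs0 (by linarith)
  have hratio : 1 / (2 * s) / (s * (1 - s)) ≤ t⁻¹ := by
    rw [div_div, inv_eq_one_div]
    exact one_div_le_one_div_of_le ht (by nlinarith)
  have hlog : max (log (1 / (2 * s) / (s * (1 - s)))) 0 ≤ 4 * t ^ (-(1 / 4 : ℝ)) :=
    (max_le_max_right 0 (log_le_log (by positivity) hratio)).trans
      (max_log_inv_le_four_mul_rpow ht)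
  have hfactor : 1 / (2 * s) ≤ 1 / 2 * t ^ (-(1 / 2 : ℝ)) := by
    rw [rpow_neg ht.le, ← sqrt_eq_rpow]
    calc 1 / (2 * s) ≤ 1 / (2 * √t) := one_div_le_one_div_of_le (by positivity) (by linarith)
      _ = 1 / 2 * (√t)⁻¹ := by ring
  calc 1 / (2 * s) * max (log (1 / (2 * s) / (s * (1 - s)))) 0
      ≤ 1 / 2 * t ^ (-(1 / 2 : ℝ)) * (4 * t ^ (-(1 / 4 : ℝ))) :=
        mul_le_mul hfactor hlog (le_max_right _ _) (by positivity)
    _ = 2 * t ^ (-(3 / 4 : ℝ)) := by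
        rw [show (-(3 / 4) : ℝ) = -(1 / 2) + -(1 / 4) by norm_num, rpow_add ht]; ring

lemma integral_rpow_le_one_div {r b : ℝ} (hr : -1 < r) (hb : 0 ≤ b) (hb1 : b ≤ 1) :
    ∫ t in (0 : ℝ)..b, t ^ r ≤ 1 / (r + 1) := by
  have hr1 : 0 < r + 1 := by linarith
  rw [integral_rpow (Or.inl hr), zero_rpow hr1.ne', sub_zero]
  gcongr
  exact rpow_le_one hb hb1 hr1.le

lemma intervalIntegrable_and_integral_le {f g : ℝ → ℝ} {a b : ℝ} (hab : a ≤ b)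
    (hf : AEStronglyMeasurable f (volume.restrict (Ioo a b)))
    (hg : IntervalIntegrable g volume a b) (hfg : ∀ t ∈ Ioo a b, 0 ≤ f t ∧ f t ≤ g t) :
    IntervalIntegrable f volume a b ∧ ∫ t in a..b, f t ≤ ∫ t in a..b, g t := by
  rw [intervalIntegrable_iff_integrableOn_Ioo_of_le hab] at hg ⊢
  have hfi : IntegrableOn f (Ioo a b) := hg.mono' hf <| (ae_restrict_iff' measurableSet_Ioo).2 <|
    ae_of_all _ fun t ht => by rw [norm_of_nonneg (hfg t ht).1]; exact (hfg t ht).2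
  refine ⟨hfi, ?_⟩
  rw [integral_of_le hab, integral_of_le hab, integral_Ioc_eq_integral_Ioo,
    integral_Ioc_eq_integral_Ioo]
  exact setIntegral_mono_on hfi hg measurableSet_Ioo fun t ht => (hfg t ht).2

lemma integral_le_add_add {f : ℝ → ℝ} {a b c d A B C : ℝ}
    (h₁ : IntervalIntegrable f volume a b ∧ ∫ t in a..b, f t ≤ A)
    (h₂ : IntervalIntegrable f volume b c ∧ ∫ t in b..c, f t ≤ B)
    (h₃ : IntervalIntegrable f volume c d ∧ ∫ t in c..d, f t ≤ C) :
    ∫ t in a..d, f t ≤ A + B + C := by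
  rw [← integral_add_adjacent_intervals (h₁.1.trans h₂.1) h₃.1,
    ← integral_add_adjacent_intervals h₁.1 h₂.1]
  linarith [h₁.2, h₂.2, h₃.2]

lemma intervalIntegrable_and_integral_le_of_comp_sub_left {f : ℝ → ℝ} {c a b C : ℝ}
    (h : IntervalIntegrable (fun s => f (c - s)) volume a b ∧ ∫ s in a..b, f (c - s) ≤ C) :
    IntervalIntegrable f volume (c - b) (c - a) ∧ ∫ t in (c - b)..(c - a), f t ≤ C := by
  refine ⟨?_, by rw [← integral_comp_sub_left]; exact h.2⟩
  simpa using (h.1.comp_sub_left c).symm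

noncomputable def invVar (φ : ℝ → ℝ) (t : ℝ) : ℝ := 1 / (φ t * (1 - φ t))

noncomputable def derivMulLogPos (φ φ' : ℝ → ℝ) (t : ℝ) : ℝ :=
  φ' t * max (log (φ' t / (φ t * (1 - φ t)))) 0

lemma invVar_reflect (φ : ℝ → ℝ) (c : ℝ) :
    invVar (fun s => 1 - φ (c - s)) = fun s => invVar φ (c - s) := by
  ext s; simp only [invVar]; ring_nf

lemma derivMulLogPos_reflect (φ φ' : ℝ → ℝ) (c : ℝ) :
    derivMulLogPos (fun s => 1 - φ (c - s)) (fun s => φ' (c - s)) =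
      fun s => derivMulLogPos φ φ' (c - s) := by
  ext s; simp only [derivMulLogPos]; ring_nf

lemma aestronglyMeasurable_invVar_and_derivMulLogPos {φ φ' : ℝ → ℝ} {a b : ℝ}
    (hD : ∀ t ∈ Ioo a b, HasDerivAt φ (φ' t) t) :
    AEStronglyMeasurable (invVar φ) (volume.restrict (Ioo a b)) ∧
      AEStronglyMeasurable (derivMulLogPos φ φ') (volume.restrict (Ioo a b)) := by
  have hφ : AEMeasurable φ (volume.restrict (Ioo a b)) :=
    ContinuousOn.aemeasurable (fun t ht => (hD t ht).continuousAt.continuousWithinAt)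
      measurableSet_Ioo
  have hφ' : AEMeasurable φ' (volume.restrict (Ioo a b)) :=
    (measurable_deriv φ).aemeasurable.congr <| (ae_restrict_iff' measurableSet_Ioo).2 <|
      ae_of_all _ fun t ht => (hD t ht).deriv
  have hm₁ : AEMeasurable (invVar φ) (volume.restrict (Ioo a b)) := by
    unfold invVar; fun_prop
  have hm₂ : AEMeasurable (derivMulLogPos φ φ') (volume.restrict (Ioo a b)) := by
    unfold derivMulLogPos; fun_prop
  exact ⟨hm₁.aestronglyMeasurable, hm₂.aestronglyMeasurable⟩

lemma integrals_le_of_eq_sqrt {φ φ' : ℝ → ℝ} {a b : ℝ} (ha : 0 ≤ a) (hb : 0 ≤ b)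
    (hab : a + b ≤ 1 / 4) (hD : ∀ t ∈ Ioo 0 b, HasDerivAt φ (φ' t) t)
    (hφ : ∀ t ∈ Ioo 0 b, φ t = √(a + t)) :
    (IntervalIntegrable (invVar φ) volume 0 b ∧ ∫ t in (0 : ℝ)..b, invVar φ t ≤ 4) ∧
      (IntervalIntegrable (derivMulLogPos φ φ') volume 0 b ∧
        ∫ t in (0 : ℝ)..b, derivMulLogPos φ φ' t ≤ 8) := by
  obtain ⟨hm₁, hm₂⟩ := aestronglyMeasurable_invVar_and_derivMulLogPos hD
  have hb1 : b ≤ 1 := by linarith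
  have hsqrt : ∀ t ∈ Ioo 0 b, √t ≤ √(a + t) ∧ √(a + t) ≤ 1 / 2 := fun t ht =>
    ⟨sqrt_le_sqrt (by linarith), sqrt_le_iff.2 ⟨by norm_num, by linarith [ht.2]⟩⟩
  have hderiv : ∀ t ∈ Ioo 0 b, φ' t = 1 / (2 * √(a + t)) := fun t ht =>
    (hD t ht).unique <|
      (((hasDerivAt_id' t).const_add a).sqrt (by linarith [ht.1])).congr_of_eventuallyEq <|
        Filter.eventuallyEq_of_mem (Ioo_mem_nhds ht.1 ht.2) hφ
  constructor
  · refine (intervalIntegrable_and_integral_le hb hm₁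
      ((intervalIntegrable_rpow' (r := -(1 / 2)) (by norm_num)).const_mul 2)
      fun t ht => ?_).imp_right (·.trans ?_)
    · obtain ⟨h₁, h₂⟩ := hsqrt t ht
      have hs : 0 < √(a + t) := (sqrt_pos.2 ht.1).trans_le h₁
      rw [invVar, hφ t ht]
      exact ⟨div_nonneg zero_le_one (mul_nonneg hs.le (by linarith)),
        one_div_mul_one_sub_le ht.1 h₁ h₂⟩
    · rw [intervalIntegral.integral_const_mul]
      linarith [integral_rpow_le_one_div (r := -(1 / 2)) (by norm_num) hb hb1]
  · refine (intervalIntegrable_and_integral_le hb hm₂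
      ((intervalIntegrable_rpow' (r := -(3 / 4)) (by norm_num)).const_mul 2)
      fun t ht => ?_).imp_right (·.trans ?_)
    · obtain ⟨h₁, h₂⟩ := hsqrt t ht
      rw [derivMulLogPos, hφ t ht, hderiv t ht]
      exact ⟨mul_nonneg (by positivity) (le_max_right _ _),
        one_div_two_mul_mul_max_log_le ht.1 h₁ h₂⟩
    · rw [intervalIntegral.integral_const_mul]
      linarith [integral_rpow_le_one_div (r := -(3 / 4)) (by norm_num) hb hb1]

lemma integrals_le_of_eq_one_sub_sqrt {φ φ' : ℝ → ℝ} {a c : ℝ} (ha : 0 ≤ a) (hc : c ≤ 1)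
    (hac : a + (1 - c) ≤ 1 / 4) (hD : ∀ t ∈ Ioo c 1, HasDerivAt φ (φ' t) t)
    (hφ : ∀ t ∈ Ioo c 1, φ t = 1 - √(a + (1 - t))) :
    (IntervalIntegrable (invVar φ) volume c 1 ∧ ∫ t in c..1, invVar φ t ≤ 4) ∧
      (IntervalIntegrable (derivMulLogPos φ φ') volume c 1 ∧
        ∫ t in c..1, derivMulLogPos φ φ' t ≤ 8) := by
  have hmem : ∀ s ∈ Ioo 0 (1 - c), 1 - s ∈ Ioo c 1 := fun s hs =>
    ⟨by linarith [hs.2], by linarith [hs.1]⟩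
  have hψ := integrals_le_of_eq_sqrt (φ := fun s => 1 - φ (1 - s)) (φ' := fun s => φ' (1 - s))
    ha (by linarith) hac
    (fun s hs => ((hD _ (hmem s hs)).comp_const_sub 1 s).const_sub 1 |>.congr_deriv (by ring))
    (fun s hs => by simp only [hφ _ (hmem s hs), sub_sub_cancel])
  rw [invVar_reflect, derivMulLogPos_reflect] at hψ
  have h₁ := intervalIntegrable_and_integral_le_of_comp_sub_left hψ.1
  have h₂ := intervalIntegrable_and_integral_le_of_comp_sub_left hψ.2
  rw [sub_sub_cancel, sub_zero] at h₁ h₂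
  exact ⟨h₁, h₂⟩

lemma integrals_le_of_deriv_le_of_le_var {φ φ' : ℝ → ℝ} {a b c M : ℝ} (hab : a ≤ b) (hc : 0 < c)
    (hD : ∀ t ∈ Ioo a b, HasDerivAt φ (φ' t) t) (hpos : ∀ t ∈ Ioo a b, 0 < φ' t)
    (hM : ∀ t ∈ Ioo a b, φ' t ≤ M) (hvar : ∀ t ∈ Ioo a b, c ≤ φ t * (1 - φ t)) :
    (IntervalIntegrable (invVar φ) volume a b ∧ ∫ t in a..b, invVar φ t ≤ (b - a) / c) ∧
      (IntervalIntegrable (derivMulLogPos φ φ') volume a b ∧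
        ∫ t in a..b, derivMulLogPos φ φ' t ≤ (b - a) * (M * max (log (M / c)) 0)) := by
  obtain ⟨hm₁, hm₂⟩ := aestronglyMeasurable_invVar_and_derivMulLogPos hD
  constructor
  · refine (intervalIntegrable_and_integral_le (g := fun _ => 1 / c) hab hm₁
      intervalIntegrable_const fun t ht => ?_).imp_right (·.trans_eq ?_)
    · have hv := hc.trans_le (hvar t ht)
      exact ⟨div_nonneg zero_le_one hv.le, one_div_le_one_div_of_le hc (hvar t ht)⟩
    · rw [intervalIntegral.integral_const, smul_eq_mul, one_div, div_eq_mul_inv]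
  · refine (intervalIntegrable_and_integral_le (g := fun _ => M * max (log (M / c)) 0) hab hm₂
      intervalIntegrable_const fun t ht => ?_).imp_right (·.trans_eq ?_)
    · have hv := hc.trans_le (hvar t ht)
      have hratio : φ' t / (φ t * (1 - φ t)) ≤ M / c :=
        div_le_div₀ ((hpos t ht).le.trans (hM t ht)) (hM t ht) hc (hvar t ht)
      exact ⟨mul_nonneg (hpos t ht).le (le_max_right _ _),
        mul_le_mul (hM t ht) (max_le_max_right 0 (log_le_log (div_pos (hpos t ht) hv) hratio))
          (le_max_right _ _) ((hpos t ht).le.trans (hM t ht))⟩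
    · rw [intervalIntegral.integral_const, smul_eq_mul]

/-- uniform integral bounds for the interpolation function `φ_ε`
used in the hypercontractivity argument (`log₊ a = max (log a) 0`). -/
theorem stmt13 (c₀ : ℝ) (hc₀ : 0 < c₀) :
    ∃ C : ℝ, ∀ ε : ℝ, 0 < ε → ε ≤ 1 / 10 →
      ∀ φ φ' : ℝ → ℝ,
        (∀ t ∈ Icc (0 : ℝ) 1, HasDerivAt φ (φ' t) t) →
        (∀ t ∈ Icc (0 : ℝ) 1, 0 < φ' t) →
        (∀ t ∈ Icc (0 : ℝ) 1, φ t ∈ Icc (ε / (1 + ε)) (1 - 2 * ε)) →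
        (∀ t ∈ Icc (0 : ℝ) (1 / 8), φ t = Real.sqrt ((ε / (1 + ε)) ^ 2 + t)) →
        (∀ t ∈ Icc (7 / 8 : ℝ) 1, φ t = 1 - Real.sqrt (4 * ε ^ 2 + 1 - t)) →
        (∀ t ∈ Icc (1 / 8 : ℝ) (7 / 8), φ' t ≤ 2) →
        (∀ t ∈ Icc (1 / 8 : ℝ) (7 / 8), c₀ ≤ φ t * (1 - φ t)) →
        (∫ t in (0 : ℝ)..1, 1 / (φ t * (1 - φ t))) ≤ C ∧
        (∫ t in (0 : ℝ)..1, φ' t * max (Real.log (φ' t / (φ t * (1 - φ t)))) 0) ≤ C := by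
  refine ⟨16 + 1 / c₀ + 2 * max (log (2 / c₀)) 0,
    fun ε hε hε' φ φ' hD hpos _ hleft hright hmid hvar => ?_⟩
  have hsub : ∀ {a b : ℝ}, 0 ≤ a → b ≤ 1 → Ioo a b ⊆ Icc 0 1 := fun ha hb =>
    Ioo_subset_Icc_self.trans (Icc_subset_Icc ha hb)
  have hδ : ε / (1 + ε) ≤ 1 / 10 := (div_le_self hε.le (by linarith)).trans hε'
  have hδ₀ : 0 < ε / (1 + ε) := div_pos hε (by linarith)
  have hL := integrals_le_of_eq_sqrt (φ' := φ') (a := (ε / (1 + ε)) ^ 2) (b := 1 / 8)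
    (by positivity) (by norm_num) (by nlinarith) (fun t ht => hD t (hsub le_rfl (by norm_num) ht))
    (fun t ht => hleft t (Ioo_subset_Icc_self ht))
  have hR := integrals_le_of_eq_one_sub_sqrt (φ' := φ') (a := 4 * ε ^ 2) (c := 7 / 8)
    (by positivity) (by norm_num) (by nlinarith) (fun t ht => hD t (hsub (by norm_num) le_rfl ht))
    (fun t ht => by rw [hright t (Ioo_subset_Icc_self ht), add_sub_assoc])
  have hM := integrals_le_of_deriv_le_of_le_var (by norm_num : (1 / 8 : ℝ) ≤ 7 / 8) hc₀
    (fun t ht => hD t (hsub (by norm_num) (by norm_num) ht))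
    (fun t ht => hpos t (hsub (by norm_num) (by norm_num) ht))
    (fun t ht => hmid t (Ioo_subset_Icc_self ht)) (fun t ht => hvar t (Ioo_subset_Icc_self ht))
  have hc : 0 < 1 / c₀ := by positivity
  have hlog : 0 ≤ max (log (2 / c₀)) 0 := le_max_right _ _
  refine ⟨(integral_le_add_add hL.1 hM.1 hR.1).trans ?_,
    (integral_le_add_add hL.2 hM.2 hR.2).trans ?_⟩
  · linarith [div_eq_mul_one_div (7 / 8 - 1 / 8 : ℝ) c₀]
  · linarith
end

section
/- For functions f, g: {0,...,N-1} → ℝ and 1 ≤ ℓ ≤ N/2, the averaging error satisfies (1/N) Σ_{j=ℓ}^{N-1-ℓ} (1/(2ℓ+1)) Σ_{k=-ℓ}^{ℓ} (f(j+k)² - f(j)²) g(j) ≤ (4ℓ ||f||_∞ ||g||_∞ / N) Σ_{j=0}^{N-2} |f(j+1) - f(j)|. -/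
/-!
For `a, b` in a window, telescoping and `y² - x² = (y + x)(y - x)` give
`|f(b)² - f(a)²| ≤ 2‖f‖_∞ Σ |f(i+1) - f(i)|`, the sum running over the window. Hence the average
around `j` is at most `2‖f‖_∞‖g‖_∞` times the variation of `f` on `[j - ℓ, j + ℓ)`, and summing
over `j` costs a factor `2ℓ`, since each increment lies in at most `2ℓ` of these windows.
-/

open Finset

lemma abs_sq_sub_sq_le {a b M : ℝ} (ha : |a| ≤ M) (hb : |b| ≤ M) :
    |b ^ 2 - a ^ 2| ≤ 2 * M * |b - a| := by
  rw [sq_sub_sq, abs_mul]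
  gcongr
  calc |b + a| ≤ |b| + |a| := abs_add_le b a
    _ ≤ 2 * M := by linarith

lemma abs_sq_sub_sq_le_sum_Ico {f : ℕ → ℝ} {M : ℝ} {lo hi a b : ℕ}
    (hf : ∀ i ∈ Icc lo hi, |f i| ≤ M) (ha : a ∈ Icc lo hi) (hb : b ∈ Icc lo hi) :
    |f b ^ 2 - f a ^ 2| ≤ 2 * M * ∑ i ∈ Ico lo hi, |f (i + 1) - f i| := by
  wlog hab : a ≤ b generalizing a b
  · rw [abs_sub_comm]
    exact this hb ha (le_of_not_ge hab)
  rw [mem_Icc] at ha hb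
  calc |f b ^ 2 - f a ^ 2| ≤ ∑ i ∈ Ico a b, |f (i + 1) ^ 2 - f i ^ 2| := by
        simpa only [Real.dist_eq, abs_sub_comm] using dist_le_Ico_sum_dist (fun i ↦ f i ^ 2) hab
    _ ≤ ∑ i ∈ Ico lo hi, |f (i + 1) ^ 2 - f i ^ 2| :=
        sum_le_sum_of_subset_of_nonneg (Ico_subset_Ico ha.1 hb.2) fun _ _ _ ↦ abs_nonneg _
    _ ≤ ∑ i ∈ Ico lo hi, 2 * M * |f (i + 1) - f i| := by
        gcongr with i hi
        rw [mem_Ico] at hi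
        exact abs_sq_sub_sq_le (hf i (mem_Icc.mpr ⟨by omega, by omega⟩))
          (hf (i + 1) (mem_Icc.mpr ⟨by omega, by omega⟩))
    _ = 2 * M * ∑ i ∈ Ico lo hi, |f (i + 1) - f i| := (mul_sum ..).symm

lemma window_average_le {f g : ℕ → ℝ} {Mf Mg : ℝ} {N ℓ j : ℕ}
    (hMf : ∀ i < N, |f i| ≤ Mf) (hMg : ∀ i < N, |g i| ≤ Mg) (hj : j + ℓ < N) :
    1 / (2 * (ℓ : ℝ) + 1) * ∑ k ∈ range (2 * ℓ + 1), (f (j + k - ℓ) ^ 2 - f j ^ 2) * g j ≤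
      2 * Mf * Mg * ∑ i ∈ Ico (j - ℓ) (j + ℓ), |f (i + 1) - f i| := by
  set V := ∑ i ∈ Ico (j - ℓ) (j + ℓ), |f (i + 1) - f i|
  have hterm : ∀ k ∈ range (2 * ℓ + 1), (f (j + k - ℓ) ^ 2 - f j ^ 2) * g j ≤ 2 * Mf * Mg * V := by
    intro k hk
    rw [mem_range] at hk
    have hsq : |f (j + k - ℓ) ^ 2 - f j ^ 2| ≤ 2 * Mf * V :=
      abs_sq_sub_sq_le_sum_Ico (fun i hi ↦ hMf i (by rw [mem_Icc] at hi; omega))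
        (mem_Icc.mpr ⟨by omega, by omega⟩) (mem_Icc.mpr ⟨by omega, by omega⟩)
    calc (f (j + k - ℓ) ^ 2 - f j ^ 2) * g j ≤ |f (j + k - ℓ) ^ 2 - f j ^ 2| * |g j| := by
          rw [← abs_mul]; exact le_abs_self _
      _ ≤ 2 * Mf * V * Mg :=
          mul_le_mul hsq (hMg j (by omega)) (abs_nonneg _) ((abs_nonneg _).trans hsq)
      _ = 2 * Mf * Mg * V := by ring
  have hsum := sum_le_card_nsmul _ _ _ hterm
  rw [card_range, nsmul_eq_mul, Nat.cast_add, Nat.cast_mul, Nat.cast_ofNat, Nat.cast_one] at hsum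
  rw [one_div_mul_eq_div, div_le_iff₀ (by positivity)]
  linarith

lemma sum_sum_Ico_window_le {a : ℕ → ℝ} {ℓ : ℕ} {s t : Finset ℕ}
    (hwin : ∀ j ∈ s, Ico (j - ℓ) (j + ℓ) ⊆ t) (ha : ∀ i, 0 ≤ a i) :
    ∑ j ∈ s, ∑ i ∈ Ico (j - ℓ) (j + ℓ), a i ≤ 2 * ℓ * ∑ i ∈ t, a i := by
  have hmult : ∀ i, #{j ∈ s | i ∈ Ico (j - ℓ) (j + ℓ)} ≤ 2 * ℓ := fun i ↦ calc
    _ ≤ #(Icc (i + 1 - ℓ) (i + ℓ)) := card_le_card fun j hj ↦ by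
      simp only [mem_filter, mem_Ico, mem_Icc] at hj ⊢
      omega
    _ ≤ 2 * ℓ := by rw [Nat.card_Icc]; omega
  calc ∑ j ∈ s, ∑ i ∈ Ico (j - ℓ) (j + ℓ), a i
      = ∑ j ∈ s, ∑ i ∈ t, if i ∈ Ico (j - ℓ) (j + ℓ) then a i else 0 :=
        sum_congr rfl fun j hj ↦ by rw [sum_ite_mem, inter_eq_right.mpr (hwin j hj)]
    _ = ∑ i ∈ t, #{j ∈ s | i ∈ Ico (j - ℓ) (j + ℓ)} * a i := by
        rw [sum_comm]
        simp only [← sum_filter, sum_const, nsmul_eq_mul]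
    _ ≤ ∑ i ∈ t, 2 * ℓ * a i := by
        gcongr with i
        · exact ha i
        · exact_mod_cast hmult i
    _ = 2 * ℓ * ∑ i ∈ t, a i := (mul_sum ..).symm

theorem stmt18_general (N ℓ : ℕ)
    (f g : ℕ → ℝ) (Mf Mg : ℝ)
    (hMf : ∀ j < N, |f j| ≤ Mf) (hMg : ∀ j < N, |g j| ≤ Mg) :
    (1 / (N : ℝ)) * ∑ j ∈ Icc ℓ (N - 1 - ℓ),
        (1 / (2 * (ℓ : ℝ) + 1)) * ∑ k ∈ range (2 * ℓ + 1),
          (f (j + k - ℓ) ^ 2 - f j ^ 2) * g j ≤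
      (4 * (ℓ : ℝ) * Mf * Mg / N) * ∑ j ∈ range (N - 1), |f (j + 1) - f j| := by
  rcases N.eq_zero_or_pos with rfl | hN
  · simp -- both sides carry the junk factor `1 / 0 = 0`
  have hMf0 : 0 ≤ Mf := (abs_nonneg _).trans (hMf 0 hN)
  have hMg0 : 0 ≤ Mg := (abs_nonneg _).trans (hMg 0 hN)
  calc _ ≤ 1 / (N : ℝ) * ∑ j ∈ Icc ℓ (N - 1 - ℓ),
          2 * Mf * Mg * ∑ i ∈ Ico (j - ℓ) (j + ℓ), |f (i + 1) - f i| := by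
        refine mul_le_mul_of_nonneg_left (sum_le_sum fun j hj ↦ window_average_le hMf hMg ?_)
          (by positivity)
        rw [mem_Icc] at hj
        omega
    _ ≤ 1 / (N : ℝ) * (2 * Mf * Mg * (2 * ℓ * ∑ i ∈ range (N - 1), |f (i + 1) - f i|)) := by
        rw [← mul_sum]
        gcongr
        exact sum_sum_Ico_window_le (fun j hj i hi ↦ by
          simp only [mem_Icc, mem_Ico, mem_range] at hj hi ⊢
          omega)
          fun _ ↦ abs_nonneg _
    _ = _ := by ring

/-- block-averaging estimate: replacing `f(j)²` by its average
over a window of radius `ℓ` produces an error controlled by the total variation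
of `f` (here `k` ranges over `{-ℓ,…,ℓ}` via `k - ℓ` with `k ∈ {0,…,2ℓ}`). -/
theorem stmt18 (N ℓ : ℕ) (hℓ1 : 1 ≤ ℓ) (hℓN : 2 * ℓ ≤ N)
    (f g : ℕ → ℝ) (Mf Mg : ℝ)
    (hMf : ∀ j < N, |f j| ≤ Mf) (hMg : ∀ j < N, |g j| ≤ Mg) :
    (1 / (N : ℝ)) * ∑ j ∈ Icc ℓ (N - 1 - ℓ),
        (1 / (2 * (ℓ : ℝ) + 1)) * ∑ k ∈ range (2 * ℓ + 1),
          (f (j + k - ℓ) ^ 2 - f j ^ 2) * g j ≤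
      (4 * (ℓ : ℝ) * Mf * Mg / N) * ∑ j ∈ range (N - 1), |f (j + 1) - f j| :=
  stmt18_general N ℓ f g Mf Mg hMf hMg
end
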